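/- arXiv:math/0009016 — 2 statements merged into one kernel-verified Lean document; each statement's English description precedes it below -/
import Mathlib

section
/- Let R be a commutative ring, let a be a unit of R, let S be an associative unital R-algebra, and let b be a unit of S satisfying the Kauffman quadratic relation a⁻¹·b² + (a² − a⁻²)·b − a·1 = 0. Set λ = a⁴ + a⁻⁴ and let c = b ⊗ b⁻¹ in the R-algebra S ⊗_R S. Then c satisfies the cubic relation c³ = (1 − λ)·c² + (λ − 1)·c + 1. -/
/-!
Factor the Kauffman relation as `(b + a³)(b - a⁻¹) = 0`: the "eigenvalues" of `b` are `-a³` and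
`a⁻¹`, so those of `b⁻¹` are `-a⁻³` and `a`. The elements `b ⊗ 1` and `1 ⊗ b⁻¹` commute and
`c` is their product, so its eigenvalues are the pairwise products `1, -a⁴, -a⁻⁴, 1`, and `c` is
killed by `(c - 1)(c + a⁴)(c + a⁻⁴) = (c - 1)(c² + λc + 1)`. The repeated eigenvalue `1` is what
makes a cubic, rather than a quartic, suffice.
-/

open scoped TensorProduct

theorem mul_pow_three_eq_of_quadratic {A : Type*} [CommRing A] {u v α α' β β' : A}
    (hα : α * α' = 1) (hβ : β * β' = 1)
    (hu : (u - α) * (u - β) = 0) (hv : (v - α') * (v - β') = 0) :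
    (u * v) ^ 3 =
      (1 + (α * β' + β * α')) * (u * v) ^ 2 - (1 + (α * β' + β * α')) * (u * v) + 1 := by
  -- `u * v - 1` factors through either root pair, so it kills each summand of `hprod`.
  have h₁ : u * v - 1 = u * (v - α') + α' * (u - α) := by linear_combination hα
  have h₂ : u * v - 1 = u * (v - β') + β' * (u - β) := by linear_combination hβ
  have hprod : (u * v - α * β') * (u * v - β * α')
      = u * α' * (v - β') * (u - β) + u * β' * (u - α) * (v - α') := by
    linear_combination u ^ 2 * hv + α' * β' * hu
  have hzero : (u * v - 1) * (u * v - α * β') * (u * v - β * α') = 0 := by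
    calc _ = (u * v - 1) * (u * α' * (v - β') * (u - β))
          + (u * v - 1) * (u * β' * (u - α) * (v - α')) := by rw [mul_assoc, hprod]; ring
      _ = 0 := by
        nth_rw 1 [h₁]
        rw [h₂]
        linear_combination (u ^ 2 * α' * (u - β) + u ^ 2 * β' * (u - α)) * hv
          + (u * α' ^ 2 * (v - β') + u * β' ^ 2 * (v - α')) * hu
  linear_combination hzero - (u * v - 1) * (β * β' * hα + hβ)

open scoped IsMulCommutative in
theorem Commute.mul_pow_three_eq_of_quadratic {R A : Type*} [CommRing R] [Ring A] [Algebra R A]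
    {u v : A} (huv : Commute u v) (α β : Rˣ)
    (hu : (u - algebraMap R A α) * (u - algebraMap R A β) = 0)
    (hv : (v - algebraMap R A ↑α⁻¹) * (v - algebraMap R A ↑β⁻¹) = 0) :
    (u * v) ^ 3 = (1 + (α * ↑β⁻¹ + β * ↑α⁻¹ : R)) • (u * v) ^ 2
      - (1 + (α * ↑β⁻¹ + β * ↑α⁻¹ : R)) • (u * v) + 1 := by
  have := Algebra.isMulCommutative_adjoin R (s := {u, v}) (by
    rintro x (rfl | rfl) y (rfl | rfl)
    exacts [rfl, huv.eq, huv.symm.eq, rfl])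
  let U : Algebra.adjoin R {u, v} := ⟨u, Algebra.subset_adjoin (by simp)⟩
  let V : Algebra.adjoin R {u, v} := ⟨v, Algebra.subset_adjoin (by simp)⟩
  have key := _root_.mul_pow_three_eq_of_quadratic (u := U) (v := V)
    (α := algebraMap R _ α) (α' := algebraMap R _ ↑α⁻¹)
    (β := algebraMap R _ β) (β' := algebraMap R _ ↑β⁻¹)
    (by simp [← map_mul]) (by simp [← map_mul]) (Subtype.ext hu) (Subtype.ext hv)
  simpa [Algebra.smul_def] using congrArg Subtype.val key

theorem Units.inv_quadratic_of_quadratic {R A : Type*} [CommRing R] [Ring A] [Algebra R A]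
    (b : Aˣ) (α β : Rˣ)
    (h : ((b : A) - algebraMap R A α) * (b - algebraMap R A β) = 0) :
    ((↑b⁻¹ : A) - algebraMap R A ↑α⁻¹) * (↑b⁻¹ - algebraMap R A ↑β⁻¹) = 0 := by
  have hα : (↑b⁻¹ : A) - algebraMap R A ↑α⁻¹
      = algebraMap R A ↑α⁻¹ * ↑b⁻¹ * (algebraMap R A α - b) := by
    rw [mul_sub, mul_assoc, ← Algebra.commutes, ← mul_assoc, ← map_mul, α.inv_mul, map_one,
      one_mul, mul_assoc, b.inv_mul, mul_one]
  have hβ : (↑b⁻¹ : A) - algebraMap R A ↑β⁻¹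
      = (algebraMap R A β - b) * (algebraMap R A ↑β⁻¹ * ↑b⁻¹) := by
    rw [sub_mul, ← mul_assoc, ← map_mul, β.mul_inv, map_one, one_mul, ← mul_assoc,
      ← Algebra.commutes, mul_assoc, b.mul_inv, mul_one]
  have h' : (algebraMap R A α - b) * (algebraMap R A β - b) = 0 := by
    rw [← neg_mul_neg, neg_sub, neg_sub, h]
  rw [hα, hβ, mul_assoc, ← mul_assoc (_ - _), h', zero_mul, mul_zero]

theorem Algebra.TensorProduct.tmul_inv_pow_three_eq {R S : Type*} [CommRing R] [Ring S]
    [Algebra R S] (b : Sˣ) (α β : Rˣ)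
    (h : ((b : S) - algebraMap R S α) * (b - algebraMap R S β) = 0) :
    ((b : S) ⊗ₜ[R] (↑b⁻¹ : S)) ^ 3
      = (1 + (α * ↑β⁻¹ + β * ↑α⁻¹ : R)) • ((b : S) ⊗ₜ[R] (↑b⁻¹ : S)) ^ 2
        - (1 + (α * ↑β⁻¹ + β * ↑α⁻¹ : R)) • ((b : S) ⊗ₜ[R] (↑b⁻¹ : S)) + 1 := by
  let ι₁ : S →ₐ[R] S ⊗[R] S := includeLeft
  let ι₂ : S →ₐ[R] S ⊗[R] S := includeRight
  have hc : (b : S) ⊗ₜ[R] (↑b⁻¹ : S) = ι₁ b * ι₂ ↑b⁻¹ := by simp [ι₁, ι₂, tmul_mul_tmul]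
  rw [hc]
  refine Commute.mul_pow_three_eq_of_quadratic ?_ α β ?_ ?_
  · simp [ι₁, ι₂, Commute, SemiconjBy, tmul_mul_tmul]
  · simpa only [map_mul, map_sub, AlgHom.commutes, map_zero] using congrArg ι₁ h
  · simpa only [map_mul, map_sub, AlgHom.commutes, map_zero] using
      congrArg ι₂ (b.inv_quadratic_of_quadratic α β h)

theorem sub_mul_sub_eq_zero_of_kauffman {R S : Type*} [CommRing R] [Ring S] [Algebra R S]
    (a : Rˣ) (b : S)
    (hb : (↑a⁻¹ : R) • (b ^ 2) + ((a : R) ^ 2 - (↑a⁻¹ : R) ^ 2) • b - (a : R) • (1 : S) = 0) :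
    (b - algebraMap R S ↑(-a ^ 3)) * (b - algebraMap R S ↑a⁻¹) = 0 := by
  have ha : (a : R) * ↑a⁻¹ = 1 := a.mul_inv
  simp only [Algebra.algebraMap_eq_smul_one, sub_mul, mul_sub, smul_mul_assoc, mul_smul_comm,
    one_mul, mul_one, ← sq]
  linear_combination (norm := skip) (a : R) • hb
  match_scalars
  · linear_combination -ha
  · linear_combination (↑a⁻¹ : R) * ha
  · linear_combination -(a : R) ^ 2 * ha

/-- Lemma 1 of the paper (algebraic form): if a unit `b` of an associative unital
`R`-algebra `S` satisfies the Kauffman quadratic relation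
`a⁻¹·b² + (a² − a⁻²)·b − a·1 = 0` for a unit `a` of `R`, and `λ = a⁴ + a⁻⁴`,
then `c = b ⊗ b⁻¹` in `S ⊗[R] S` satisfies `c³ = (1 − λ)·c² + (λ − 1)·c + 1`. -/
theorem kauffman_tensor_cubic_relation
    (R : Type*) [CommRing R] (S : Type*) [Ring S] [Algebra R S]
    (a : Rˣ) (b : Sˣ)
    (hb : (↑a⁻¹ : R) • ((b : S) ^ 2) + ((a : R) ^ 2 - (↑a⁻¹ : R) ^ 2) • (b : S)
            - (a : R) • (1 : S) = 0)
    (lam : R) (hlam : lam = (a : R) ^ 4 + (↑a⁻¹ : R) ^ 4)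
    (c : S ⊗[R] S) (hc : c = (b : S) ⊗ₜ[R] (↑b⁻¹ : S)) :
    c ^ 3 = (1 - lam) • c ^ 2 + (lam - 1) • c + 1 := by
  have hroots := sub_mul_sub_eq_zero_of_kauffman a (b : S) hb
  have hsum : (1 + (↑(-a ^ 3) * ↑(a⁻¹)⁻¹ + ↑a⁻¹ * ↑(-a ^ 3)⁻¹) : R) = 1 - lam := by
    simp only [Units.val_neg, Units.val_pow_eq_pow_val, inv_inv, inv_neg,
      Units.inv_pow_eq_pow_inv, hlam]
    ring
  rw [hc, Algebra.TensorProduct.tmul_inv_pow_three_eq b (-a ^ 3) a⁻¹ hroots, hsum]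
  module
end

section
/- Let R be a commutative ring, let a be a unit of R, and let x and y be elements of R each satisfying the Kauffman quadratic relation (that is, a⁻¹·x² + (a² − a⁻²)·x − a = 0 and a⁻¹·y² + (a² − a⁻²)·y − a = 0), with y a unit. Set λ = a⁴ + a⁻⁴ and z = x·y⁻¹. Then z³ = (1 − λ)·z² + (λ − 1)·z + 1. -/
/-!
Multiplying the Kauffman quadratic by `a` factors it as `(w - a⁻¹) (w + a³)`. For any two roots
`x, y` of a monic quadratic `(X - p) (X - q)` the product `(x - y) (p x - q y) (q x - p y)` vanishes,
so the ratio `z = x / y` is a root of `(z - 1) (p z - q) (q z - p)`. For `p = a⁻¹`, `q = -a³` this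
is `-a² (z - 1) (z² + λ z + 1)`, and `(z - 1) (z² + λ z + 1)` is the cubic of the theorem.
-/

theorem sub_mul_mul_eq_zero_of_quadratic_roots {R : Type*} [CommRing R] {p q x y : R}
    (hx : (x - p) * (x - q) = 0) (hy : (y - p) * (y - q) = 0) :
    (x - y) * (p * x - q * y) * (q * x - p * y) = 0 := by
  -- reduce modulo `w² = (p + q) w - p q` for `w = x, y`
  linear_combination
    (p * q * (x - y) + p * q * (p + q) - ((p + q) ^ 2 - 2 * p * q) * y) * hx
      + (p * q * (x - y) - p * q * (p + q) + ((p + q) ^ 2 - 2 * p * q) * x) * hy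

theorem ratio_sub_one_mul_mul_eq_zero_of_quadratic_roots {R : Type*} [CommRing R] {p q x : R} {y : Rˣ}
    (hx : (x - p) * (x - q) = 0) (hy : ((y : R) - p) * (y - q) = 0) :
    (x * ↑y⁻¹ - 1) * (p * (x * ↑y⁻¹) - q) * (q * (x * ↑y⁻¹) - p) = 0 := by
  have h := sub_mul_mul_eq_zero_of_quadratic_roots hx hy
  have hxy : x = x * ↑y⁻¹ * y := by simp
  rw [hxy] at h
  apply (y ^ 3).isUnit.mul_left_cancel
  push_cast
  linear_combination h

theorem Units.kauffman_quadratic_factor {R : Type*} [CommRing R] (a : Rˣ) {w : R}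
    (hw : (↑a⁻¹ : R) * w ^ 2 + ((a : R) ^ 2 - (↑a⁻¹ : R) ^ 2) * w - (a : R) = 0) :
    (w - ↑a⁻¹) * (w - -(a : R) ^ 3) = 0 := by
  have ha : (a : R) * ↑a⁻¹ = 1 := a.mul_inv
  linear_combination (a : R) * hw + (↑a⁻¹ * w - w ^ 2 - (a : R) ^ 2) * ha

theorem Units.kauffman_ratio_factor {R : Type*} [CommRing R] (a : Rˣ) (z : R) :
    (↑a⁻¹ * z - -(a : R) ^ 3) * (-(a : R) ^ 3 * z - ↑a⁻¹)
      = -(a : R) ^ 2 * (z ^ 2 + ((a : R) ^ 4 + (↑a⁻¹ : R) ^ 4) * z + 1) := by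
  have ha : (a : R) * ↑a⁻¹ = 1 := a.mul_inv
  linear_combination
    (-(a : R) ^ 2 * z ^ 2 + (↑a⁻¹ : R) ^ 2 * ((a : R) * ↑a⁻¹ + 1) * z - (a : R) ^ 2) * ha

/-- Commutative (eigenvalue) form of Lemma 1: if `x` and `y` in a commutative ring
`R` each satisfy the Kauffman quadratic relation `a⁻¹·w² + (a² − a⁻²)·w − a = 0`
for a unit `a`, with `y` a unit, then `z = x·y⁻¹` satisfies
`z³ = (1 − λ)·z² + (λ − 1)·z + 1` where `λ = a⁴ + a⁻⁴`. -/
theorem kauffman_ratio_cubic_relation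
    (R : Type*) [CommRing R] (a : Rˣ) (x : R) (y : Rˣ)
    (hx : (↑a⁻¹ : R) * x ^ 2 + ((a : R) ^ 2 - (↑a⁻¹ : R) ^ 2) * x - (a : R) = 0)
    (hy : (↑a⁻¹ : R) * (y : R) ^ 2 + ((a : R) ^ 2 - (↑a⁻¹ : R) ^ 2) * (y : R) - (a : R) = 0)
    (lam : R) (hlam : lam = (a : R) ^ 4 + (↑a⁻¹ : R) ^ 4)
    (z : R) (hz : z = x * (↑y⁻¹ : R)) :
    z ^ 3 = (1 - lam) * z ^ 2 + (lam - 1) * z + 1 := by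
  have hratio := ratio_sub_one_mul_mul_eq_zero_of_quadratic_roots (a.kauffman_quadratic_factor hx)
    (a.kauffman_quadratic_factor hy)
  rw [← hz, mul_assoc, a.kauffman_ratio_factor, ← hlam] at hratio
  have hcubic : (z - 1) * (z ^ 2 + lam * z + 1) = 0 := by
    apply (a ^ 2).isUnit.mul_left_cancel
    push_cast
    linear_combination -hratio
  linear_combination hcubic
end
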